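/- arXiv:2602.21781 — 2 statements merged into one kernel-verified Lean document; each statement's English description precedes it below -/
import Mathlib

section
/- Let H be a complex Hilbert space and let T : H →ₗ.[ℂ] H be a symmetric, densely defined unbounded operator (LinearPMap with T.IsSymmetric). Let (e n)ₙ∈ℕ and (f m)ₘ∈ℕ be Hilbert bases of H (HilbertBasis ℕ ℂ H) all of whose vectors lie in T.domain, and let α, β : ℕ → ℝ be nonnegative sequences with ∑ₙ α n = 1 and ∑ₘ β m = 1. Assume that for every x ∈ H, ∑ₙ α n • ⟪e n, x⟫ • e n = ∑ₘ β m • ⟪f m, x⟫ • f m (equality of the two convergent sums in H, i.e. the two representations define the same density operator ρ), and that the series ∑ₙ α n · ‖⟪e n, T (e n)⟫‖ and ∑ₘ β m · ‖⟪f m, T (f m)⟫‖ are summable. Then ∑ₙ α n · ⟪e n, T (e n)⟫ = ∑ₘ β m · ⟪f m, T (f m)⟫. -/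
/-!
The weights are eigenvalues of the density operator: `ρ (e n) = α n • e n` and
`ρ (f m) = β m • f m`, so `⟪f m, e n⟫ = 0` unless `α n = β m`. Expanding `⟪e n, T (e n)⟫` in
the basis `f` (using the symmetry of `T`) and `⟪f m, T (f m)⟫` in the basis `e` writes both
traces as iterated sums of `α n * ⟪f m, e n⟫ * ⟪e n, T (f m)⟫`, in the two possible orders.
This double series need not converge absolutely, but grouping both sides by the common
eigenvalue `l` reduces everything to the level sets `{α = l}` and `{β = l}`; for `l ≠ 0` they are
finite because the weights tend to zero, and there the two summations commute.
-/

open scoped ComplexInnerProductSpace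

/-- A densely defined (in general unbounded) operator `T` is symmetric if
`⟪T x, y⟫ = ⟪x, T y⟫` for all `x, y` in its domain. -/
def LinearPMap.IsSymmetric {H : Type*} [NormedAddCommGroup H] [InnerProductSpace ℂ H]
    (T : H →ₗ.[ℂ] H) : Prop :=
  ∀ x y : T.domain, ⟪T x, (y : H)⟫ = ⟪(x : H), T y⟫

open Filter Topology

section Orthonormal

variable {𝕜 E ι κ : Type*} [RCLike 𝕜] [NormedAddCommGroup E] [InnerProductSpace 𝕜 E]
  {v : ι → E}

local notation "⟪" x ", " y "⟫" => inner 𝕜 x y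

theorem Orthonormal.tsum_smul_inner_smul_self (hv : Orthonormal 𝕜 v) (γ : ι → 𝕜) (j : ι) :
    ∑' i, γ i • ⟪v i, v j⟫ • v i = γ j • v j := by
  rw [tsum_eq_single j fun i hij => by simp [hv.inner_eq_zero hij]]
  simp [hv.1 j]

variable [CompleteSpace E]

theorem Orthonormal.summable_smul_inner_smul (hv : Orthonormal 𝕜 v) {γ : ι → 𝕜} {C : ℝ}
    (hγ : ∀ i, ‖γ i‖ ≤ C) (x : E) : Summable fun i => γ i • ⟪v i, x⟫ • v i := by
  have hsq : Summable fun i => ‖γ i * ⟪v i, x⟫‖ ^ 2 := by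
    refine .of_nonneg_of_le (fun _ => by positivity) (fun i => ?_)
      ((hv.inner_products_summable x).mul_left (C ^ 2))
    rw [norm_mul, mul_pow]
    gcongr
    exact hγ i
  simpa [LinearIsometry.toSpanSingleton_apply, smul_smul] using
    (hv.orthogonalFamily.summable_iff_norm_sq_summable _).mpr hsq

theorem Orthonormal.inner_tsum_smul_inner_smul (hv : Orthonormal 𝕜 v) {γ : ι → 𝕜} {C : ℝ}
    (hγ : ∀ i, ‖γ i‖ ≤ C) (x : E) (j : ι) :
    ⟪v j, ∑' i, γ i • ⟪v i, x⟫ • v i⟫ = γ j * ⟪v j, x⟫ := by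
  rw [← innerSL_apply_apply, (innerSL 𝕜 (v j)).map_tsum (hv.summable_smul_inner_smul hγ x),
    tsum_eq_single j fun i hij => by simp [hv.inner_eq_zero hij.symm]]
  simp [hv.1 j]

theorem Orthonormal.inner_eq_zero_of_tsum_smul_inner_smul_eq {e : ι → E} {f : κ → E}
    (he : Orthonormal 𝕜 e) (hf : Orthonormal 𝕜 f) {α : ι → 𝕜} {β : κ → 𝕜} {C : ℝ}
    (hβ : ∀ j, ‖β j‖ ≤ C)
    (hρ : ∀ x, ∑' i, α i • ⟪e i, x⟫ • e i = ∑' j, β j • ⟪f j, x⟫ • f j)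
    {i : ι} {j : κ} (hij : α i ≠ β j) : ⟪f j, e i⟫ = 0 := by
  have h := congrArg (⟪f j, ·⟫) (hρ (e i))
  simp only [he.tsum_smul_inner_smul_self, inner_smul_right,
    hf.inner_tsum_smul_inner_smul hβ] at h
  by_contra hne
  exact hij ((mul_left_inj' hne).mp h)

end Orthonormal

theorem LinearPMap.IsSymmetric.hasSum_inner_mul_inner_apply {H ι : Type*} [NormedAddCommGroup H]
    [InnerProductSpace ℂ H] {T : H →ₗ.[ℂ] H} (hT : T.IsSymmetric) (b : HilbertBasis ι ℂ H)
    (hb : ∀ i, b i ∈ T.domain) (x : T.domain) :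
    HasSum (fun i => ⟪b i, (x : H)⟫ * ⟪(x : H), T ⟨b i, hb i⟩⟫) ⟪(x : H), T x⟫ := by
  have h := b.hasSum_inner_mul_inner (T x) x
  simp only [fun i => hT x ⟨b i, hb i⟩, hT x x, mul_comm] at h
  exact h

section FiberSum

variable {𝕜 ι κ : Type*} [NormedField 𝕜]
  {α : ι → 𝕜} {β : κ → 𝕜} {d : ι → κ → 𝕜} {t : ι → 𝕜} {s : κ → 𝕜}

theorem tsum_fiber_mul_eq_of_hasSum (hα : Tendsto α cofinite (𝓝 0))
    (hβ : Tendsto β cofinite (𝓝 0)) (hd : ∀ i j, α i ≠ β j → d i j = 0)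
    (ht : ∀ i, HasSum (d i) (t i)) (hs : ∀ j, HasSum (d · j) (s j)) {l : 𝕜} (hl : l ≠ 0) :
    ∑' i : α ⁻¹' {l}, α i * t i = ∑' j : β ⁻¹' {l}, β j * s j := by
  have : Fintype (α ⁻¹' {l}) := Set.Finite.fintype <|
    (eventually_cofinite.mp (hα.eventually_ne hl.symm)).subset fun i hi => by simpa using hi
  have : Fintype (β ⁻¹' {l}) := Set.Finite.fintype <|
    (eventually_cofinite.mp (hβ.eventually_ne hl.symm)).subset fun j hj => by simpa using hj
  have ht_fiber : ∀ i : α ⁻¹' {l}, t i = ∑ j : β ⁻¹' {l}, d i j := fun i => by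
    rw [← tsum_fintype (L := .unconditional _), tsum_subtype_eq_of_support_subset,
      (ht i).tsum_eq]
    intro j hj
    by_contra hne
    exact hj (hd i j fun h => hne (h.symm.trans i.2))
  have hs_fiber : ∀ j : β ⁻¹' {l}, s j = ∑ i : α ⁻¹' {l}, d i j := fun j => by
    rw [← tsum_fintype (L := .unconditional _), tsum_subtype_eq_of_support_subset (f := (d · j)),
      (hs j).tsum_eq]
    intro i hi
    by_contra hne
    exact hi (hd i j fun h => hne (h.trans j.2))
  calc ∑' i : α ⁻¹' {l}, α i * t i = ∑ i : α ⁻¹' {l}, ∑ j : β ⁻¹' {l}, l * d i j := by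
        rw [tsum_fintype]
        refine Finset.sum_congr rfl fun i _ => ?_
        rw [ht_fiber, Finset.mul_sum, show α i = l from i.2]
    _ = ∑ j : β ⁻¹' {l}, ∑ i : α ⁻¹' {l}, l * d i j := Finset.sum_comm
    _ = ∑' j : β ⁻¹' {l}, β j * s j := by
        rw [tsum_fintype]
        refine Finset.sum_congr rfl fun j _ => ?_
        rw [hs_fiber, Finset.mul_sum, show β j = l from j.2]

theorem tsum_mul_eq_tsum_mul_of_hasSum [CompleteSpace 𝕜] (hα : Tendsto α cofinite (𝓝 0))
    (hβ : Tendsto β cofinite (𝓝 0)) (hd : ∀ i j, α i ≠ β j → d i j = 0)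
    (ht : ∀ i, HasSum (d i) (t i)) (hs : ∀ j, HasSum (d · j) (s j))
    (hαt : Summable fun i => α i * t i) (hβs : Summable fun j => β j * s j) :
    ∑' i, α i * t i = ∑' j, β j * s j := by
  calc ∑' i, α i * t i = ∑' l, ∑' i : α ⁻¹' {l}, α i * t i :=
        (hαt.hasSum.tsum_fiberwise α).tsum_eq.symm
    _ = ∑' l, ∑' j : β ⁻¹' {l}, β j * s j := tsum_congr fun l => ?_
    _ = ∑' j, β j * s j := (hβs.hasSum.tsum_fiberwise β).tsum_eq
  rcases eq_or_ne l 0 with rfl | hl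
  · simp [show ∀ i : α ⁻¹' {0}, α i = 0 from fun i => i.2,
      show ∀ j : β ⁻¹' {0}, β j = 0 from fun j => j.2]
  · exact tsum_fiber_mul_eq_of_hasSum hα hβ hd ht hs hl

end FiberSum

theorem stmt_8_general {H : Type*} [NormedAddCommGroup H] [InnerProductSpace ℂ H] [CompleteSpace H]
    (T : H →ₗ.[ℂ] H) (hT : T.IsSymmetric)
    (e f : HilbertBasis ℕ ℂ H)
    (he : ∀ n, e n ∈ T.domain) (hf : ∀ m, f m ∈ T.domain)
    (α β : ℕ → ℝ) (hα : ∀ n, 0 ≤ α n) (hβ : ∀ m, 0 ≤ β m)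
    (hα1 : ∑' n, α n = 1) (hβ1 : ∑' m, β m = 1)
    (hρ : ∀ x : H,
      (∑' n, (α n : ℂ) • ⟪e n, x⟫ • e n) = ∑' m, (β m : ℂ) • ⟪f m, x⟫ • f m)
    (hesum : Summable fun n => α n * ‖⟪e n, T ⟨e n, he n⟩⟫‖)
    (hfsum : Summable fun m => β m * ‖⟪f m, T ⟨f m, hf m⟩⟫‖) :
    ∑' n, (α n : ℂ) * ⟪e n, T ⟨e n, he n⟩⟫ = ∑' m, (β m : ℂ) * ⟪f m, T ⟨f m, hf m⟩⟫ := by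
  have hαs : Summable α := by
    by_contra h
    simp [tsum_eq_zero_of_not_summable h] at hα1
  have hβs : Summable β := by
    by_contra h
    simp [tsum_eq_zero_of_not_summable h] at hβ1
  have hβle : ∀ m, ‖(β m : ℂ)‖ ≤ 1 := fun m => by
    rw [Complex.norm_real, Real.norm_of_nonneg (hβ m), ← hβ1]
    exact hβs.le_tsum m fun k _ => hβ k
  refine tsum_mul_eq_tsum_mul_of_hasSum (d := fun n m => ⟪f m, e n⟫ * ⟪e n, T ⟨f m, hf m⟩⟫)
    (Complex.summable_ofReal.mpr hαs).tendsto_cofinite_zero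
    (Complex.summable_ofReal.mpr hβs).tendsto_cofinite_zero
    (fun n m hnm => ?_) (fun n => hT.hasSum_inner_mul_inner_apply f hf ⟨e n, he n⟩)
    (fun m => e.hasSum_inner_mul_inner (f m) _) ?_ ?_
  · rw [e.orthonormal.inner_eq_zero_of_tsum_smul_inner_smul_eq f.orthonormal hβle hρ hnm,
      zero_mul]
  · exact .of_norm (by simpa [abs_of_nonneg (hα _)] using hesum)
  · exact .of_norm (by simpa [abs_of_nonneg (hβ _)] using hfsum)

theorem stmt_8 {H : Type*} [NormedAddCommGroup H] [InnerProductSpace ℂ H] [CompleteSpace H]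
    (T : H →ₗ.[ℂ] H) (hdense : Dense (T.domain : Set H)) (hT : T.IsSymmetric)
    (e f : HilbertBasis ℕ ℂ H)
    (he : ∀ n, e n ∈ T.domain) (hf : ∀ m, f m ∈ T.domain)
    (α β : ℕ → ℝ) (hα : ∀ n, 0 ≤ α n) (hβ : ∀ m, 0 ≤ β m)
    (hα1 : ∑' n, α n = 1) (hβ1 : ∑' m, β m = 1)
    (hρ : ∀ x : H,
      (∑' n, (α n : ℂ) • ⟪e n, x⟫ • e n) = ∑' m, (β m : ℂ) • ⟪f m, x⟫ • f m)
    (hesum : Summable fun n => α n * ‖⟪e n, T ⟨e n, he n⟩⟫‖)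
    (hfsum : Summable fun m => β m * ‖⟪f m, T ⟨f m, hf m⟩⟫‖) :
    ∑' n, (α n : ℂ) * ⟪e n, T ⟨e n, he n⟩⟫ = ∑' m, (β m : ℂ) * ⟪f m, T ⟨f m, hf m⟩⟫ :=
  stmt_8_general T hT e f he hf α β hα hβ hα1 hβ1 hρ hesum hfsum
end

section
/- Let E be a complex Hilbert space, ι a type, and for each i : ι let G i be a complex Hilbert space. Suppose A : Π i, (G i →L[ℂ] E) is a family of bounded linear maps such that (A i).adjoint.comp (A i) = ContinuousLinearMap.id for every i, (A i).adjoint.comp (A j) = 0 for all i ≠ j, and for every x ∈ E the family (fun i => A i ((A i).adjoint x)) has sum x (HasSum). Then the map Φ : E → Π i, G i given by Φ x i = (A i).adjoint x takes values in lp G 2 and defines a linear isometric equivalence E ≃ₗᵢ[ℂ] lp G 2; in particular E is isometrically isomorphic to the Hilbert space direct sum of the family (G i). -/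
open scoped ComplexInnerProductSpace

theorem stmt_11 {E : Type*} [NormedAddCommGroup E] [InnerProductSpace ℂ E] [CompleteSpace E]
    {ι : Type*} (G : ι → Type*) [∀ i, NormedAddCommGroup (G i)]
    [∀ i, InnerProductSpace ℂ (G i)] [∀ i, CompleteSpace (G i)]
    (A : ∀ i, G i →L[ℂ] E)
    (h1 : ∀ i, (ContinuousLinearMap.adjoint (A i)).comp (A i) = ContinuousLinearMap.id ℂ (G i))
    (h2 : ∀ i j, i ≠ j → (ContinuousLinearMap.adjoint (A i)).comp (A j) = 0)
    (h3 : ∀ x : E, HasSum (fun i => A i (ContinuousLinearMap.adjoint (A i) x)) x) :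
    ∃ Φ : E ≃ₗᵢ[ℂ] lp G 2, ∀ (x : E) (i : ι),
      (Φ x : ∀ i, G i) i = ContinuousLinearMap.adjoint (A i) x := by
  classical
  have hinner : ∀ i (v w : G i), ⟪A i v, A i w⟫ = ⟪v, w⟫ := by
    intro i v w
    rw [← ContinuousLinearMap.adjoint_inner_left]
    have := congrArg (fun T : G i →L[ℂ] G i => T v) (h1 i)
    simp only [ContinuousLinearMap.comp_apply, ContinuousLinearMap.id_apply] at this
    rw [this]
  let V : ∀ i, G i →ₗᵢ[ℂ] E := fun i =>
    ⟨(A i).toLinearMap, fun g => by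
      have h := hinner i g g
      rw [@norm_eq_sqrt_re_inner ℂ, @norm_eq_sqrt_re_inner ℂ (G i)]
      simp only [ContinuousLinearMap.coe_coe]
      rw [h]⟩
  have hVA : ∀ i (g : G i), V i g = A i g := fun i g => rfl
  have hortho : OrthogonalFamily ℂ G V := by
    intro i j hij v w
    rw [hVA, hVA, ← ContinuousLinearMap.adjoint_inner_right]
    have := congrArg (fun T : G j →L[ℂ] G i => T w) (h2 i j hij)
    simp only [ContinuousLinearMap.comp_apply, ContinuousLinearMap.zero_apply] at this
    rw [this, inner_zero_right]
  have htotal : (⊤ : Submodule ℂ E) ≤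
      (⨆ i, LinearMap.range (V i).toLinearMap).topologicalClosure := by
    intro x _
    have : x ∈ closure ((⨆ i, LinearMap.range (V i).toLinearMap : Submodule ℂ E) : Set E) := by
      refine mem_closure_of_tendsto (h3 x) (Filter.Eventually.of_forall fun s => ?_)
      exact Submodule.sum_mem _ fun i _ =>
        Submodule.mem_iSup_of_mem i ⟨ContinuousLinearMap.adjoint (A i) x, rfl⟩
    rwa [← SetLike.mem_coe, Submodule.topologicalClosure_coe]
  have hV : IsHilbertSum ℂ G V := IsHilbertSum.mk hortho htotal
  refine ⟨hV.linearIsometryEquiv, fun x i => ?_⟩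
  refine ext_inner_left ℂ fun g => ?_
  rw [← lp.inner_single_left, ContinuousLinearMap.adjoint_inner_right]
  calc ⟪lp.single 2 i g, hV.linearIsometryEquiv x⟫
      = ⟪hV.linearIsometryEquiv.symm (lp.single 2 i g),
          hV.linearIsometryEquiv.symm (hV.linearIsometryEquiv x)⟫ := by
        rw [LinearIsometryEquiv.inner_map_map]
    _ = ⟪A i g, x⟫ := by
        rw [hV.linearIsometryEquiv_symm_apply_single,
          LinearIsometryEquiv.symm_apply_apply, hVA]
end
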